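/- (Section 4, formulas (⋆)) Let 𝔭 = (F¹, …, F^r) be an ordered partition of I with r ≥ 2 and let 𝔮 = (F², …, F^r), an ordered partition of J = I ∖ F¹, with its data computed inside V' = span{λ_i : i ∈ J}. Define θ_{F¹}^Λ(H) = 1 if for every i ∈ F¹ one has ⟨λ_{𝔭,i}, H⟩ ≤ 0 when ⟨μ_i, Λ⟩ > 0 and ⟨λ_{𝔭,i}, H⟩ > 0 when ⟨μ_i, Λ⟩ ≤ 0, and θ_{F¹}^Λ(H) = 0 otherwise; define τ_{F¹}(H) = 1 if ⟨λ_{𝔭,i}, H⟩ > 0 for every i ∈ F¹, and τ_{F¹}(H) = 0 otherwise. Then for all Λ, H ∈ V one has φ_𝔭^Λ(H) = θ_{F¹}^Λ(H) · φ_𝔮^Λ(H) and ψ_𝔭^Λ(H) = τ_{F¹}(H) · φ_𝔮^Λ(H). -/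

import Mathlib

open scoped Classical

noncomputable section

local notation "⟪" x ", " y "⟫" => @inner ℝ _ _ x y

/-- An ordered partition of the finite set `ttl`: a finite sequence `F 0, …, F (r-1)` of
nonempty pairwise disjoint finsets whose union is `ttl`.  (We index the parts by `Fin r`,
so the `u`-th part of the paper, `1 ≤ u ≤ r`, is `F (u-1)`.) -/
structure OrderedPartition (I : Type*) [DecidableEq I] (ttl : Finset I) where
  r : ℕ
  F : Fin r → Finset I
  nonempty : ∀ u, (F u).Nonempty
  disj : ∀ u v : Fin r, u ≠ v → Disjoint (F u) (F v)
  covers : Finset.univ.biUnion F = ttl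

namespace OrderedPartition

variable {V : Type*} [NormedAddCommGroup V] [InnerProductSpace ℝ V] [FiniteDimensional ℝ V]
variable {I : Type*} [Fintype I] [DecidableEq I] {ttl : Finset I}

/-- `E^v = F¹ ∪ ⋯ ∪ F^v` (1-indexed `v`). -/
def Epart (p : OrderedPartition I ttl) (v : ℕ) : Finset I :=
  Finset.univ.biUnion fun u : Fin p.r => if (u : ℕ) < v then p.F u else ∅

/-- The (1-indexed) index `u` of the part `F^u` containing `i` (and `0` if `i` is in no part). -/
def partIdx (p : OrderedPartition I ttl) (i : I) : ℕ :=
  ∑ u : Fin p.r, if i ∈ p.F u then (u : ℕ) + 1 else 0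

/-- `U^v`, the span of `{μ_i : i ∈ E^v}`. -/
def Uspace (p : OrderedPartition I ttl) (mu : I → V) (v : ℕ) : Submodule ℝ V :=
  Submodule.span ℝ (mu '' ↑(p.Epart v))

/-- `W^u` (1-indexed `u`), the orthogonal complement of `U^{u-1}` in `U^u`. -/
def Wspace (p : OrderedPartition I ttl) (mu : I → V) (u : ℕ) : Submodule ℝ V :=
  p.Uspace mu u ⊓ (p.Uspace mu (u - 1))ᗮ

/-- `λ_{𝔭,i}`, the orthogonal projection of `λ_i` onto `W^u` for `i ∈ F^u`. -/
def lamp (p : OrderedPartition I ttl) (lam mu : I → V) (i : I) : V :=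
  (Submodule.orthogonalProjectionOnto (p.Wspace mu (p.partIdx i)) (lam i) : V)

/-- `μ_{𝔭,i}`, the orthogonal projection of `μ_i` onto `W^u` for `i ∈ F^u`. -/
def mup (p : OrderedPartition I ttl) (mu : I → V) (i : I) : V :=
  (Submodule.orthogonalProjectionOnto (p.Wspace mu (p.partIdx i)) (mu i) : V)

/-- The characteristic function `φ_𝔭^Λ(H)`. -/
def phi (p : OrderedPartition I ttl) (lam mu : I → V) (Λ H : V) : ℤ :=
  if ∀ i ∈ ttl,
      (0 < ⟪p.mup mu i, Λ⟫ → ⟪p.lamp lam mu i, H⟫ ≤ 0) ∧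
      (⟪p.mup mu i, Λ⟫ ≤ 0 → 0 < ⟪p.lamp lam mu i, H⟫)
  then 1 else 0

/-- The characteristic function `ψ_𝔭^Λ(H)`. -/
def psi (p : OrderedPartition I ttl) (lam mu : I → V) (Λ H : V) : ℤ :=
  if ∀ i ∈ ttl,
      (p.partIdx i = 1 → 0 < ⟪p.lamp lam mu i, H⟫) ∧
      (p.partIdx i ≠ 1 →
        (0 < ⟪p.mup mu i, Λ⟫ → ⟪p.lamp lam mu i, H⟫ ≤ 0) ∧
        (⟪p.mup mu i, Λ⟫ ≤ 0 → 0 < ⟪p.lamp lam mu i, H⟫))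
  then 1 else 0

/-- `b_𝔭^Λ = #{i : ⟪μ_{𝔭,i}, Λ⟫ ≤ 0}`. -/
def bpart (p : OrderedPartition I ttl) (mu : I → V) (Λ : V) : ℕ :=
  (ttl.filter fun i => ⟪p.mup mu i, Λ⟫ ≤ 0).card

/-- `c_𝔭^Λ = #{i ∉ F¹ : ⟪μ_{𝔭,i}, Λ⟫ ≤ 0}`. -/
def cpart (p : OrderedPartition I ttl) (mu : I → V) (Λ : V) : ℕ :=
  (ttl.filter fun i => p.partIdx i ≠ 1 ∧ ⟪p.mup mu i, Λ⟫ ≤ 0).card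

/-- `α_𝔭^Λ = b_𝔭^Λ + Σ_{u=1}^{r} (a^u + 1)`. -/
def alphaP (p : OrderedPartition I ttl) (mu : I → V) (Λ : V) : ℕ :=
  p.bpart mu Λ + ∑ u : Fin p.r, ((p.F u).card + 1)

/-- `β_𝔭^Λ = 1 + c_𝔭^Λ + Σ_{u=2}^{r} (a^u + 1)`. -/
def betaP (p : OrderedPartition I ttl) (mu : I → V) (Λ : V) : ℕ :=
  1 + p.cpart mu Λ + ∑ u : Fin p.r, if 1 ≤ (u : ℕ) then (p.F u).card + 1 else 0

end OrderedPartition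

/-- `μ'_i`, the orthogonal projection of `μ_i` onto `V' = span{λ_j : j ∈ J}`; for `i ∈ J` these
form the basis of `V'` dual to `(λ_i)_{i∈J}`. -/
noncomputable def muSub {V : Type*} [NormedAddCommGroup V] [InnerProductSpace ℝ V]
    [FiniteDimensional ℝ V] {I : Type*} (lam mu : I → V) (J : Finset I) (i : I) : V :=
  (Submodule.orthogonalProjectionOnto (Submodule.span ℝ (lam '' ↑J)) (mu i) : V)

/-! ### Auxiliary lemmas -/

lemma mem_orthogonal_span_iff' {V : Type*} [NormedAddCommGroup V] [InnerProductSpace ℝ V]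
    (s : Set V) (x : V) :
    x ∈ (Submodule.span ℝ s)ᗮ ↔ ∀ v ∈ s, ⟪v, x⟫ = 0 := by
  constructor
  · intro hx v hv
    exact hx v (Submodule.subset_span hv)
  · intro h u hu
    induction hu using Submodule.span_induction with
    | mem v hv => exact h v hv
    | zero => simp
    | add a c _ _ ha hc => simp [inner_add_left, ha, hc]
    | smul r a _ ha => simp [inner_smul_left, ha]

lemma dual_expansion {V : Type*} [NormedAddCommGroup V] [InnerProductSpace ℝ V]
    [FiniteDimensional ℝ V] {I : Type*} [Fintype I] [DecidableEq I] (b : Module.Basis I ℝ V) (mu : I → V)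
    (hmu : ∀ i j : I, ⟪mu i, b j⟫ = if i = j then 1 else 0) (x : V) :
    x = ∑ j, ⟪x, b j⟫ • mu j := by
  have key : ∀ k, ⟪x - ∑ j, ⟪x, b j⟫ • mu j, b k⟫ = 0 := by
    intro k
    rw [inner_sub_left, sum_inner]
    simp [inner_smul_left, hmu, mul_ite, Finset.sum_ite_eq']
  have hy : (x - ∑ j, ⟪x, b j⟫ • mu j) ∈ (Submodule.span ℝ (Set.range ⇑b))ᗮ := by
    rw [mem_orthogonal_span_iff']
    rintro v ⟨k, rfl⟩
    rw [real_inner_comm]; exact key k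
  rw [b.span_eq, Submodule.top_orthogonal_eq_bot, Submodule.mem_bot, sub_eq_zero] at hy
  exact hy

namespace OrderedPartition

lemma partIdx_eq {I : Type*} [Fintype I] [DecidableEq I] {ttl : Finset I}
    (p : OrderedPartition I ttl) {u : Fin p.r} {i : I} (hi : i ∈ p.F u) :
    p.partIdx i = (u : ℕ) + 1 := by
  unfold partIdx
  rw [Finset.sum_eq_single u]
  · simp [hi]
  · intro v _ hvu
    have : i ∉ p.F v := fun h => (Finset.disjoint_left.1 (p.disj v u hvu)) h hi
    simp [this]
  · simp [hi]

lemma mem_Epart {I : Type*} [Fintype I] [DecidableEq I] {ttl : Finset I}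
    (p : OrderedPartition I ttl) (v : ℕ) (i : I) :
    i ∈ p.Epart v ↔ ∃ u : Fin p.r, (u : ℕ) < v ∧ i ∈ p.F u := by
  simp only [Epart, Finset.mem_biUnion, Finset.mem_univ, true_and]
  constructor
  · rintro ⟨u, hu⟩
    by_cases h : (u : ℕ) < v
    · exact ⟨u, h, by simpa [h] using hu⟩
    · simp [h] at hu
  · rintro ⟨u, h1, h2⟩
    exact ⟨u, by simp [h1, h2]⟩

end OrderedPartition

/-- Section 4, formulas (⋆): with `𝔭`, `𝔮` as above,
`φ_𝔭^Λ(H) = θ_{F¹}^Λ(H) · φ_𝔮^Λ(H)` and `ψ_𝔭^Λ(H) = τ_{F¹}(H) · φ_𝔮^Λ(H)`. -/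
theorem tail_partition_star_formulas
    {V : Type*} [NormedAddCommGroup V] [InnerProductSpace ℝ V] [FiniteDimensional ℝ V]
    {I : Type*} [Fintype I] [DecidableEq I] [Nonempty I]
    (b : Module.Basis I ℝ V) (mu : I → V)
    (hmu : ∀ i j : I, ⟪mu i, b j⟫ = if i = j then 1 else 0)
    (p : OrderedPartition I (Finset.univ : Finset I)) (hr2 : 2 ≤ p.r)
    (J : Finset I) (hJ : J = Finset.univ \ p.F ⟨0, by omega⟩)
    (q : OrderedPartition I J) (hqr : q.r + 1 = p.r)
    (hqF : ∀ v : Fin q.r, q.F v = p.F ⟨(v : ℕ) + 1, by have := v.isLt; omega⟩)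
    (Λ H : V) :
    p.phi (⇑b) mu Λ H
      = (if ∀ i ∈ p.F ⟨0, by omega⟩,
            (0 < ⟪mu i, Λ⟫ → ⟪p.lamp (⇑b) mu i, H⟫ ≤ 0) ∧
            (⟪mu i, Λ⟫ ≤ 0 → 0 < ⟪p.lamp (⇑b) mu i, H⟫)
         then 1 else 0)
          * q.phi (⇑b) (muSub (⇑b) mu J) Λ H
    ∧ p.psi (⇑b) mu Λ H
      = (if ∀ i ∈ p.F ⟨0, by omega⟩, 0 < ⟪p.lamp (⇑b) mu i, H⟫ then 1 else 0)
          * q.phi (⇑b) (muSub (⇑b) mu J) Λ H := by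
  classical
  have hr0 : 0 < p.r := by omega
  set mu' : I → V := muSub (⇑b) mu J with hmu'def
  set V' : Submodule ℝ V := Submodule.span ℝ (⇑b '' ↑J) with hV'def
  set F1 : Finset I := p.F ⟨0, hr0⟩ with hF1def
  set U1 : Submodule ℝ V := Submodule.span ℝ (mu '' ↑F1) with hU1def
  have hmemJ : ∀ i : I, i ∈ J ↔ i ∉ F1 := by
    intro i; rw [hJ]; simp [hF1def]
  -- μ'ᵢ as an orthogonal projection
  have hmu'eq : ∀ i, mu' i = (Submodule.orthogonalProjectionOnto V' (mu i) : V) := fun i => rfl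
  have hsub : ∀ i, mu i - mu' i ∈ V'ᗮ := by
    intro i; rw [hmu'eq]
    exact Submodule.sub_starProjection_mem_orthogonal (mu i)
  have hmu'memV' : ∀ i, mu' i ∈ V' := by
    intro i; rw [hmu'eq]; exact Submodule.coe_mem _
  -- U1 = V'ᗮ
  have hU1leV'o : U1 ≤ V'ᗮ := by
    rw [Submodule.span_le]
    rintro _ ⟨i, hi, rfl⟩
    rw [SetLike.mem_coe, mem_orthogonal_span_iff']
    rintro _ ⟨j, hj, rfl⟩
    rw [real_inner_comm, hmu i j, if_neg]
    intro h; subst h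
    exact ((hmemJ i).1 hj) hi
  have hU1V' : U1 = V'ᗮ := by
    refine le_antisymm hU1leV'o ?_
    intro x hx
    rw [dual_expansion b mu hmu x]
    refine Submodule.sum_mem _ fun j _ => ?_
    by_cases hj : j ∈ F1
    · exact Submodule.smul_mem _ _ (Submodule.subset_span ⟨j, hj, rfl⟩)
    · have hjJ : j ∈ J := (hmemJ j).2 hj
      have hbj : (b j : V) ∈ V' := Submodule.subset_span ⟨j, hjJ, rfl⟩
      have : ⟪x, b j⟫ = 0 := by
        rw [real_inner_comm]
        exact hx (b j) hbj
      rw [this, zero_smul]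
      exact Submodule.zero_mem _
  have hU1orth : U1ᗮ = V' := by
    rw [hU1V', Submodule.orthogonal_orthogonal]
  have hmu'0 : ∀ i ∈ F1, mu' i = 0 := by
    intro i hi
    have : mu i ∈ V'ᗮ := hU1leV'o (Submodule.subset_span ⟨i, hi, rfl⟩)
    rw [hmu'eq, Submodule.orthogonalProjectionOnto_apply_of_mem_orthogonal this,
      Submodule.coe_zero]
  -- span identity (f)
  have hB : ∀ S : Finset I, (S : Set I) ⊆ ↑J →
      Submodule.span ℝ (mu' '' ↑S) = Submodule.span ℝ (mu '' ↑(S ∪ F1)) ⊓ V' := by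
    intro S hS
    refine le_antisymm ?_ ?_
    · rw [Submodule.span_le]
      rintro _ ⟨i, hi, rfl⟩
      refine Submodule.mem_inf.2 ⟨?_, hmu'memV' i⟩
      have h1 : mu i ∈ Submodule.span ℝ (mu '' ↑(S ∪ F1)) :=
        Submodule.subset_span ⟨i, by simp [Finset.mem_union, hi], rfl⟩
      have h2 : mu i - mu' i ∈ Submodule.span ℝ (mu '' ↑(S ∪ F1)) := by
        have : mu i - mu' i ∈ U1 := by rw [hU1V']; exact hsub i
        refine Submodule.span_mono ?_ this
        exact Set.image_mono (by intro j hj; simp [Finset.mem_union]; tauto)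
      have := Submodule.sub_mem _ h1 h2
      simpa using this
    · rintro x hx
      rw [Submodule.mem_inf] at hx
      obtain ⟨hx1, hx2⟩ := hx
      set P : V →ₗ[ℝ] V := V'.subtype ∘ₗ (Submodule.orthogonalProjectionOnto V').toLinearMap with hPdef
      have hPx : P x = x := by
        simp only [hPdef, LinearMap.comp_apply, Submodule.subtype_apply,
          ContinuousLinearMap.coe_coe]
        exact Submodule.starProjection_eq_self_iff.2 hx2
      have hmem : P x ∈ Submodule.map P (Submodule.span ℝ (mu '' ↑(S ∪ F1))) :=
        Submodule.mem_map_of_mem hx1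
      rw [Submodule.map_span] at hmem
      rw [← hPx]
      refine Submodule.span_le.2 ?_ hmem
      rintro _ ⟨_, ⟨i, hi, rfl⟩, rfl⟩
      have hPmu : P (mu i) = mu' i := rfl
      rw [SetLike.mem_coe, hPmu]
      rcases Finset.mem_union.1 (by exact_mod_cast hi) with h | h
      · exact Submodule.subset_span ⟨i, h, rfl⟩
      · rw [hmu'0 i h]; exact Submodule.zero_mem _
  -- Epart relation (g)
  have hEp : ∀ v : ℕ, q.Epart v ∪ F1 = p.Epart (v + 1) := by
    intro v
    ext i
    rw [Finset.mem_union, q.mem_Epart, p.mem_Epart]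
    constructor
    · rintro (⟨u, hu, hi⟩ | hi)
      · refine ⟨⟨(u : ℕ) + 1, by have := u.isLt; omega⟩, by show (u : ℕ) + 1 < v + 1; omega, ?_⟩
        have := hi; rwa [hqF u] at this
      · exact ⟨⟨0, hr0⟩, by show 0 < v + 1; omega, hi⟩
    · rintro ⟨w, hw, hi⟩
      by_cases h0 : (w : ℕ) = 0
      · right
        have : w = ⟨0, hr0⟩ := Fin.ext h0
        rwa [this] at hi
      · left
        have hwlt : (w : ℕ) - 1 < q.r := by have := w.isLt; omega
        refine ⟨⟨(w : ℕ) - 1, hwlt⟩, by show (w : ℕ) - 1 < v; omega, ?_⟩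
        rw [hqF ⟨(w : ℕ) - 1, hwlt⟩]
        have : (⟨(w : ℕ) - 1 + 1, by omega⟩ : Fin p.r) = w :=
          Fin.ext (show (w : ℕ) - 1 + 1 = (w : ℕ) by omega)
        rwa [this]
  have hEJ : ∀ v : ℕ, (q.Epart v : Set I) ⊆ ↑J := by
    intro v i hi
    rw [Finset.mem_coe, q.mem_Epart] at hi
    obtain ⟨u, _, hi⟩ := hi
    rw [← q.covers]
    exact Finset.mem_biUnion.2 ⟨u, Finset.mem_univ u, hi⟩
  -- U-space relation (h)
  have hU : ∀ v : ℕ, q.Uspace mu' v = p.Uspace mu (v + 1) ⊓ V' := by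
    intro v
    show Submodule.span ℝ (mu' '' ↑(q.Epart v)) = _
    rw [hB _ (hEJ v), hEp v]
    rfl
  -- U1 ≤ U^v for v ≥ 1 (i)
  have hU1leU : ∀ v : ℕ, 1 ≤ v → U1 ≤ p.Uspace mu v := by
    intro v hv
    refine Submodule.span_mono (Set.image_mono ?_)
    intro i hi
    rw [Finset.mem_coe, p.mem_Epart]
    exact ⟨⟨0, hr0⟩, show (0:ℕ) < v by omega, hi⟩
  -- W-space relation (j)
  have hW : ∀ v : ℕ, 1 ≤ v → q.Wspace mu' v = p.Wspace mu (v + 1) := by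
    intro v hv
    have h1 : q.Uspace mu' v = p.Uspace mu (v + 1) ⊓ V' := hU v
    have h2 : q.Uspace mu' (v - 1) = p.Uspace mu v ⊓ V' := by
      have := hU (v - 1); rwa [Nat.sub_add_cancel hv] at this
    show q.Uspace mu' v ⊓ (q.Uspace mu' (v - 1))ᗮ = p.Uspace mu (v + 1) ⊓ (p.Uspace mu (v + 1 - 1))ᗮ
    rw [h1, h2, Nat.add_sub_cancel]
    set A := p.Uspace mu (v + 1)
    set B := p.Uspace mu v
    have hU1B : U1 ≤ B := hU1leU v hv
    refine le_antisymm ?_ ?_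
    · rintro x hx
      rw [Submodule.mem_inf] at hx
      obtain ⟨hx1, hx2⟩ := hx
      rw [Submodule.mem_inf] at hx1
      refine Submodule.mem_inf.2 ⟨hx1.1, ?_⟩
      show x ∈ (Submodule.span ℝ (mu '' ↑(p.Epart v)))ᗮ
      rw [mem_orthogonal_span_iff']
      rintro _ ⟨j, hj, rfl⟩
      have hmu'B : mu' j ∈ B ⊓ V' := by
        refine Submodule.mem_inf.2 ⟨?_, hmu'memV' j⟩
        have h1 : mu j ∈ B := Submodule.subset_span ⟨j, hj, rfl⟩
        have h2 : mu j - mu' j ∈ B := hU1B (by rw [hU1V']; exact hsub j)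
        simpa using Submodule.sub_mem _ h1 h2
      have e1 : ⟪mu' j, x⟫ = 0 := hx2 (mu' j) hmu'B
      have e2 : ⟪mu j - mu' j, x⟫ = 0 := by
        rw [real_inner_comm]
        exact (Submodule.mem_orthogonal _ _).1 (hsub j) x hx1.2
      have : ⟪mu' j + (mu j - mu' j), x⟫ = 0 := by
        rw [inner_add_left, e1, e2, add_zero]
      simpa using this
    · rintro x hx
      rw [Submodule.mem_inf] at hx
      obtain ⟨hx1, hx2⟩ := hx
      have hxV' : x ∈ V' := by
        rw [← hU1orth]
        exact Submodule.orthogonal_le hU1B hx2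
      refine Submodule.mem_inf.2 ⟨Submodule.mem_inf.2 ⟨hx1, hxV'⟩, ?_⟩
      exact Submodule.orthogonal_le inf_le_left hx2
  -- W¹(p) = U1, and μ_{𝔭,i} = μ_i for i ∈ F¹ (m, n)
  have hEp0 : p.Epart 0 = ∅ := by
    ext i; rw [p.mem_Epart]; simp
  have hEp1 : p.Epart 1 = F1 := by
    ext i
    rw [p.mem_Epart]
    constructor
    · rintro ⟨u, hu, hi⟩
      have : u = ⟨0, hr0⟩ := Fin.ext (show (u : ℕ) = 0 by omega)
      rwa [this] at hi
    · intro hi; exact ⟨⟨0, hr0⟩, show (0:ℕ) < 1 by omega, hi⟩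
  have hWp1 : p.Wspace mu 1 = U1 := by
    show p.Uspace mu 1 ⊓ (p.Uspace mu 0)ᗮ = U1
    have h0 : p.Uspace mu 0 = ⊥ := by
      show Submodule.span ℝ (mu '' ↑(p.Epart 0)) = ⊥
      rw [hEp0]; simp
    have h1 : p.Uspace mu 1 = U1 := by
      show Submodule.span ℝ (mu '' ↑(p.Epart 1)) = U1
      rw [hEp1]
    rw [h0, h1, Submodule.bot_orthogonal_eq_top, inf_top_eq]
  have hidxF1 : ∀ i ∈ F1, p.partIdx i = 1 := by
    intro i hi
    have := p.partIdx_eq (u := ⟨0, hr0⟩) hi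
    simpa using this
  have hmupF1 : ∀ i ∈ F1, p.mup mu i = mu i := by
    intro i hi
    show (Submodule.orthogonalProjectionOnto (p.Wspace mu (p.partIdx i)) (mu i) : V) = mu i
    rw [hidxF1 i hi, hWp1]
    exact Submodule.starProjection_eq_self_iff.2 (Submodule.subset_span ⟨i, hi, rfl⟩)
  -- data for i ∈ J
  have hidxJ : ∀ i ∈ J, ∃ u : Fin q.r, i ∈ q.F u ∧ q.partIdx i = (u : ℕ) + 1 ∧
      p.partIdx i = (u : ℕ) + 2 := by
    intro i hi
    have : i ∈ Finset.univ.biUnion q.F := by rw [q.covers]; exact hi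
    obtain ⟨u, _, hu⟩ := Finset.mem_biUnion.1 this
    have hpu : i ∈ p.F ⟨(u : ℕ) + 1, by have := u.isLt; omega⟩ := by
      rw [← hqF u]; exact hu
    exact ⟨u, hu, q.partIdx_eq hu, by simpa using p.partIdx_eq hpu⟩
  have hWJ : ∀ i ∈ J, q.Wspace mu' (q.partIdx i) = p.Wspace mu (p.partIdx i) := by
    intro i hi
    obtain ⟨u, _, hq1, hp1⟩ := hidxJ i hi
    rw [hq1, hp1]
    have h12 : (u : ℕ) + 2 = ((u : ℕ) + 1) + 1 := by omega
    rw [h12]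
    exact hW ((u : ℕ) + 1) (by omega)
  have hlampJ : ∀ i ∈ J, p.lamp (⇑b) mu i = q.lamp (⇑b) mu' i := by
    intro i hi
    show (Submodule.orthogonalProjectionOnto (p.Wspace mu (p.partIdx i)) (b i) : V)
      = (Submodule.orthogonalProjectionOnto (q.Wspace mu' (q.partIdx i)) (b i) : V)
    rw [hWJ i hi]
  have hmupJ : ∀ i ∈ J, p.mup mu i = q.mup mu' i := by
    intro i hi
    obtain ⟨u, _, hq1, hp1⟩ := hidxJ i hi
    show (Submodule.orthogonalProjectionOnto (p.Wspace mu (p.partIdx i)) (mu i) : V)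
      = (Submodule.orthogonalProjectionOnto (q.Wspace mu' (q.partIdx i)) (mu' i) : V)
    rw [hWJ i hi]
    set K := p.Wspace mu (p.partIdx i) with hK
    have hKle : K ≤ U1ᗮ := by
      have h1 : K ≤ (p.Uspace mu (p.partIdx i - 1))ᗮ := inf_le_right
      have h2 : U1 ≤ p.Uspace mu (p.partIdx i - 1) := by
        refine hU1leU _ ?_
        omega
      exact le_trans h1 (Submodule.orthogonal_le h2)
    have hwK : mu i - mu' i ∈ Kᗮ := by
      rw [Submodule.mem_orthogonal]
      intro z hz
      rw [real_inner_comm]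
      have hzU1o : z ∈ U1ᗮ := hKle hz
      have hw : mu i - mu' i ∈ U1 := by rw [hU1V']; exact hsub i
      exact (Submodule.mem_orthogonal _ _).1 hzU1o _ hw
    have : Submodule.orthogonalProjectionOnto K (mu i) = Submodule.orthogonalProjectionOnto K (mu' i) := by
      have hdecomp : mu i = mu' i + (mu i - mu' i) := by abel
      rw [hdecomp, map_add, Submodule.orthogonalProjectionOnto_apply_of_mem_orthogonal hwK,
        add_zero]
    rw [this]
  have hidxJne : ∀ i ∈ J, p.partIdx i ≠ 1 := by
    intro i hi
    obtain ⟨u, _, _, hp1⟩ := hidxJ i hi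
    omega
  -- splitting ∀ over univ
  have hsplit : ∀ P : I → Prop,
      (∀ i ∈ (Finset.univ : Finset I), P i) ↔ ((∀ i ∈ F1, P i) ∧ ∀ i ∈ J, P i) := by
    intro P
    constructor
    · exact fun h => ⟨fun i _ => h i (Finset.mem_univ i), fun i _ => h i (Finset.mem_univ i)⟩
    · rintro ⟨h1, h2⟩ i -
      by_cases hi : i ∈ F1
      · exact h1 i hi
      · exact h2 i ((hmemJ i).2 hi)
  have prod_ite : ∀ (X Y : Prop) (dx : Decidable X) (dy : Decidable Y)
      (dxy : Decidable (X ∧ Y)), (@ite ℤ (X ∧ Y) dxy 1 0)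
      = (@ite ℤ X dx 1 0) * (@ite ℤ Y dy 1 0) := by
    intro X Y dx dy dxy
    by_cases hX : X <;> by_cases hY : Y <;> simp [hX, hY]
  have hF1cong : (∀ i ∈ F1,
      (0 < ⟪p.mup mu i, Λ⟫ → ⟪p.lamp (⇑b) mu i, H⟫ ≤ 0) ∧
      (⟪p.mup mu i, Λ⟫ ≤ 0 → 0 < ⟪p.lamp (⇑b) mu i, H⟫)) ↔ (∀ i ∈ F1,
      (0 < ⟪mu i, Λ⟫ → ⟪p.lamp (⇑b) mu i, H⟫ ≤ 0) ∧
      (⟪mu i, Λ⟫ ≤ 0 → 0 < ⟪p.lamp (⇑b) mu i, H⟫)) := by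
    refine forall_congr' fun i => imp_congr_right fun hi => ?_
    rw [hmupF1 i hi]
  have hJcong : (∀ i ∈ J,
      (0 < ⟪p.mup mu i, Λ⟫ → ⟪p.lamp (⇑b) mu i, H⟫ ≤ 0) ∧
      (⟪p.mup mu i, Λ⟫ ≤ 0 → 0 < ⟪p.lamp (⇑b) mu i, H⟫)) ↔ (∀ i ∈ J,
      (0 < ⟪q.mup mu' i, Λ⟫ → ⟪q.lamp (⇑b) mu' i, H⟫ ≤ 0) ∧
      (⟪q.mup mu' i, Λ⟫ ≤ 0 → 0 < ⟪q.lamp (⇑b) mu' i, H⟫)) := by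
    refine forall_congr' fun i => imp_congr_right fun hi => ?_
    rw [hmupJ i hi, hlampJ i hi]
  constructor
  · show (if ∀ i ∈ (Finset.univ : Finset I),
        (0 < ⟪p.mup mu i, Λ⟫ → ⟪p.lamp (⇑b) mu i, H⟫ ≤ 0) ∧
        (⟪p.mup mu i, Λ⟫ ≤ 0 → 0 < ⟪p.lamp (⇑b) mu i, H⟫) then (1 : ℤ) else 0)
      = (if ∀ i ∈ F1,
            (0 < ⟪mu i, Λ⟫ → ⟪p.lamp (⇑b) mu i, H⟫ ≤ 0) ∧
            (⟪mu i, Λ⟫ ≤ 0 → 0 < ⟪p.lamp (⇑b) mu i, H⟫) then (1 : ℤ) else 0)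
        * (if ∀ i ∈ J,
            (0 < ⟪q.mup mu' i, Λ⟫ → ⟪q.lamp (⇑b) mu' i, H⟫ ≤ 0) ∧
            (⟪q.mup mu' i, Λ⟫ ≤ 0 → 0 < ⟪q.lamp (⇑b) mu' i, H⟫) then (1 : ℤ) else 0)
    rw [if_congr ((hsplit _).trans (and_congr hF1cong hJcong)) rfl rfl, prod_ite _ _ _ _ _]
  · show (if ∀ i ∈ (Finset.univ : Finset I),
        (p.partIdx i = 1 → 0 < ⟪p.lamp (⇑b) mu i, H⟫) ∧
        (p.partIdx i ≠ 1 →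
          (0 < ⟪p.mup mu i, Λ⟫ → ⟪p.lamp (⇑b) mu i, H⟫ ≤ 0) ∧
          (⟪p.mup mu i, Λ⟫ ≤ 0 → 0 < ⟪p.lamp (⇑b) mu i, H⟫)) then (1 : ℤ) else 0)
      = (if ∀ i ∈ F1, 0 < ⟪p.lamp (⇑b) mu i, H⟫ then (1 : ℤ) else 0)
        * (if ∀ i ∈ J,
            (0 < ⟪q.mup mu' i, Λ⟫ → ⟪q.lamp (⇑b) mu' i, H⟫ ≤ 0) ∧
            (⟪q.mup mu' i, Λ⟫ ≤ 0 → 0 < ⟪q.lamp (⇑b) mu' i, H⟫) then (1 : ℤ) else 0)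
    have hpsiF1 : (∀ i ∈ F1,
        (p.partIdx i = 1 → 0 < ⟪p.lamp (⇑b) mu i, H⟫) ∧
        (p.partIdx i ≠ 1 →
          (0 < ⟪p.mup mu i, Λ⟫ → ⟪p.lamp (⇑b) mu i, H⟫ ≤ 0) ∧
          (⟪p.mup mu i, Λ⟫ ≤ 0 → 0 < ⟪p.lamp (⇑b) mu i, H⟫)))
        ↔ (∀ i ∈ F1, 0 < ⟪p.lamp (⇑b) mu i, H⟫) := by
      refine forall_congr' fun i => imp_congr_right fun hi => ?_
      simp [hidxF1 i hi]
    have hpsiJ : (∀ i ∈ J,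
        (p.partIdx i = 1 → 0 < ⟪p.lamp (⇑b) mu i, H⟫) ∧
        (p.partIdx i ≠ 1 →
          (0 < ⟪p.mup mu i, Λ⟫ → ⟪p.lamp (⇑b) mu i, H⟫ ≤ 0) ∧
          (⟪p.mup mu i, Λ⟫ ≤ 0 → 0 < ⟪p.lamp (⇑b) mu i, H⟫)))
        ↔ (∀ i ∈ J,
            (0 < ⟪q.mup mu' i, Λ⟫ → ⟪q.lamp (⇑b) mu' i, H⟫ ≤ 0) ∧
            (⟪q.mup mu' i, Λ⟫ ≤ 0 → 0 < ⟪q.lamp (⇑b) mu' i, H⟫)) := by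
      refine forall_congr' fun i => imp_congr_right fun hi => ?_
      rw [hmupJ i hi, hlampJ i hi]
      simp [hidxJne i hi]
    rw [if_congr ((hsplit _).trans (and_congr hpsiF1 hpsiJ)) rfl rfl, prod_ite _ _ _ _ _]
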